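/- arXiv:0909.2242 — 2 statements merged into one kernel-verified Lean document; each statement's English description precedes it below -/
import Mathlib

section
/- Let λ be an A^H-regular partition, b an addable box and b' a removable box of λ of the same color with h(b) - 1 = h(b') + 1. If c is any addable box of the same color with b ≻_{A^H} c ≻_{A^H} b', then h(c) = h(b); if c is any removable box of the same color with b ≻_{A^H} c ≻_{A^H} b', then h(c) = h(b'). -/
/-- The content of a box with cell coordinates `(i, j)` (row `i`, column `j`, zero-indexed;
in the paper's half-integer coordinates the box is `(i + 1/2, j + 1/2)`). -/
def content (p : ℕ × ℕ) : ℤ := (p.2 : ℤ) - (p.1 : ℤ)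

/-- The height `h(b) = x_b + y_b` of a box (in the paper's half-integer coordinates). -/
def height (p : ℕ × ℕ) : ℤ := (p.1 : ℤ) + (p.2 : ℤ) + 1

/-- A box is addable if adding it yields a Young diagram. -/
def IsAddable (μ : YoungDiagram) (p : ℕ × ℕ) : Prop :=
  p ∉ μ ∧ ∃ ν : YoungDiagram, ν.cells = insert p μ.cells

/-- A box is removable if deleting it yields a Young diagram. -/
def IsRemovable (μ : YoungDiagram) (p : ℕ × ℕ) : Prop :=
  p ∈ μ ∧ ∃ ν : YoungDiagram, ν.cells = μ.cells.erase p

/-- The arm sequence `A^H_t = ⌈n t / 2⌉ - 1`. -/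
def AH (n : ℕ) (t : ℤ) : ℤ := ⌈((n : ℚ) * (t : ℚ)) / 2⌉ - 1

/-- The arm length of a box in a Young diagram. -/
def armLen (μ : YoungDiagram) (p : ℕ × ℕ) : ℤ := (μ.rowLen p.1 : ℤ) - (p.2 : ℤ) - 1

/-- The hook length of a box in a Young diagram. -/
def hookLen (μ : YoungDiagram) (p : ℕ × ℕ) : ℤ :=
  (μ.rowLen p.1 : ℤ) - (p.2 : ℤ) + (μ.colLen p.2 : ℤ) - (p.1 : ℤ) - 1

/-- A box of `μ` is `A^H`-illegal if `hook = n t` and `arm = A^H_t` for some `t ≥ 1`. -/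
def IllegalAH (n : ℕ) (μ : YoungDiagram) (p : ℕ × ℕ) : Prop :=
  p ∈ μ ∧ ∃ t : ℤ, 1 ≤ t ∧ hookLen μ p = (n : ℤ) * t ∧ armLen μ p = AH n t

/-- A partition is `A^H`-regular if it has no `A^H`-illegal boxes. -/
def RegularAH (n : ℕ) (μ : YoungDiagram) : Prop := ∀ p, ¬ IllegalAH n μ p

/-- The order `≻_{A^H}` on boxes whose contents are congruent mod `n` (and distinct):
`b' ≻ b` iff (for `c(b') - c(b) = n t`, `t > 0`) `y_{b'} - y_b > A^H_t`, and
(for `c(b) - c(b') = n t`, `t > 0`) the negation of the corresponding condition. -/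
def SuccAH (n : ℕ) (b' b : ℕ × ℕ) : Prop :=
  (∃ t : ℤ, 0 < t ∧ content b' - content b = (n : ℤ) * t ∧ (b'.2 : ℤ) - (b.2 : ℤ) > AH n t) ∨
  (∃ t : ℤ, 0 < t ∧ content b - content b' = (n : ℤ) * t ∧ ¬ ((b.2 : ℤ) - (b'.2 : ℤ) > AH n t))

open Classical in
/-- The finite set of addable boxes of a Young diagram. -/
noncomputable def addables (μ : YoungDiagram) : Finset (ℕ × ℕ) :=
  ((Finset.range (μ.colLen 0 + 1)) ×ˢ (Finset.range (μ.rowLen 0 + 1))).filter (IsAddable μ)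

open Classical in
/-- The finite set of removable boxes of a Young diagram. -/
noncomputable def removables (μ : YoungDiagram) : Finset (ℕ × ℕ) :=
  μ.cells.filter (IsRemovable μ)

/-- Addable boxes of color `i`. -/
noncomputable def addablesC (n : ℕ) (i : ZMod n) (μ : YoungDiagram) : Finset (ℕ × ℕ) :=
  (addables μ).filter (fun b => ((content b : ZMod n) = i))

/-- Removable boxes of color `i`. -/
noncomputable def removablesC (n : ℕ) (i : ZMod n) (μ : YoungDiagram) : Finset (ℕ × ℕ) :=
  (removables μ).filter (fun b => ((content b : ZMod n) = i))

/-!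
If `c(u) - c(v) = n t` then `h(u) - h(v) = 2 (y_u - y_v) - n t` (`y` being the column index), and
`n t` is `2 A^H_t + 1` or `2 A^H_t + 2`; so `u ≻ v` always gives `h(v) ≤ h(u)`. If moreover `u` is
addable and `v` removable, the box lying in the row of one and the column of the other has hook
length `± n t` and arm `y_v - y_u` or `y_u - y_v - 1`; regularity forbids that arm to be `A^H_t`,
which moves `y_u - y_v` one step further and improves the bound to `h(v) + 2 ≤ h(u)`. For `c`
addable this squeezes `h(c)` between `h(b') + 2 = h(b)` and `h(b)`, for `c` removable between
`h(b')` and `h(b) - 2 = h(b')`.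
-/

variable {μ : YoungDiagram} {p a r : ℕ × ℕ}

lemma two_mul_AH_lt (n : ℕ) (t : ℤ) : 2 * AH n t < n * t := by
  have h := Int.ceil_lt_add_one ((n : ℚ) * t / 2)
  have : ((2 * AH n t : ℤ) : ℚ) < ((n * t : ℤ) : ℚ) := by
    unfold AH; push_cast; linarith
  exact_mod_cast this

lemma mul_le_two_mul_AH_add_two (n : ℕ) (t : ℤ) : n * t ≤ 2 * AH n t + 2 := by
  have h := Int.le_ceil ((n : ℚ) * t / 2)
  have : ((n * t : ℤ) : ℚ) ≤ ((2 * AH n t + 2 : ℤ) : ℚ) := by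
    unfold AH; push_cast; linarith
  exact_mod_cast this

lemma hookLen_pos (hp : p ∈ μ) : 0 < hookLen μ p := by
  have hrow := YoungDiagram.mem_iff_lt_rowLen.1 hp
  have hcol := YoungDiagram.mem_iff_lt_colLen.1 hp
  unfold hookLen
  omega

lemma RegularAH.armLen_ne {n : ℕ} (hreg : RegularAH n μ) (hp : p ∈ μ) {t : ℤ} (ht : 0 < t)
    (hhook : hookLen μ p = n * t) : armLen μ p ≠ AH n t :=
  fun harm => hreg p ⟨hp, t, ht, hhook, harm⟩

lemma IsAddable.mem_of_lt (ha : IsAddable μ a) {q : ℕ × ℕ} (hq : q < a) : q ∈ μ := by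
  obtain ⟨-, ν, hν⟩ := ha
  have hqν : q ∈ ν.cells := ν.isLowerSet hq.le (by rw [hν]; exact Finset.mem_insert_self a _)
  rw [hν, Finset.mem_insert] at hqν
  exact hqν.resolve_left hq.ne

lemma IsRemovable.notMem_of_lt (hr : IsRemovable μ r) {q : ℕ × ℕ} (hq : r < q) :
    q ∉ μ := by
  obtain ⟨-, ν, hν⟩ := hr
  intro hqμ
  have hqν : q ∈ ν.cells := by rw [hν]; exact Finset.mem_erase.2 ⟨hq.ne', hqμ⟩
  have hrν : r ∈ ν.cells := ν.isLowerSet hq.le hqν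
  rw [hν] at hrν
  exact Finset.notMem_erase r _ hrν

lemma IsAddable.rowLen_eq (ha : IsAddable μ a) : μ.rowLen a.1 = a.2 := by
  obtain ⟨i, j⟩ := a
  refine le_antisymm (not_lt.1 fun h => ha.1 (YoungDiagram.mem_iff_lt_rowLen.2 h)) ?_
  cases j with
  | zero => exact Nat.zero_le _
  | succ j =>
    exact YoungDiagram.mem_iff_lt_rowLen.1 <|
      ha.mem_of_lt (Prod.mk_lt_mk_of_le_of_lt le_rfl j.lt_succ_self)

lemma IsAddable.colLen_eq (ha : IsAddable μ a) : μ.colLen a.2 = a.1 := by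
  obtain ⟨i, j⟩ := a
  refine le_antisymm (not_lt.1 fun h => ha.1 (YoungDiagram.mem_iff_lt_colLen.2 h)) ?_
  cases i with
  | zero => exact Nat.zero_le _
  | succ i =>
    exact YoungDiagram.mem_iff_lt_colLen.1 <|
      ha.mem_of_lt (Prod.mk_lt_mk_of_lt_of_le i.lt_succ_self le_rfl)

lemma IsRemovable.rowLen_eq (hr : IsRemovable μ r) : μ.rowLen r.1 = r.2 + 1 :=
  le_antisymm
    (not_lt.1 fun h => hr.notMem_of_lt (Prod.mk_lt_mk_of_le_of_lt le_rfl r.2.lt_succ_self)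
      (YoungDiagram.mem_iff_lt_rowLen.2 h))
    (YoungDiagram.mem_iff_lt_rowLen.1 hr.1)

lemma IsRemovable.colLen_eq (hr : IsRemovable μ r) : μ.colLen r.2 = r.1 + 1 :=
  le_antisymm
    (not_lt.1 fun h => hr.notMem_of_lt (Prod.mk_lt_mk_of_lt_of_le r.1.lt_succ_self le_rfl)
      (YoungDiagram.mem_iff_lt_colLen.2 h))
    (YoungDiagram.mem_iff_lt_colLen.1 hr.1)

lemma IsAddable.hookLen_armLen_of_snd_le (ha : IsAddable μ a) (hr : IsRemovable μ r)
    (h : a.2 ≤ r.2) :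
    (r.1, a.2) ∈ μ ∧ hookLen μ (r.1, a.2) = content r - content a ∧
      armLen μ (r.1, a.2) = r.2 - a.2 := by
  have hrow := hr.rowLen_eq
  have hcol := ha.colLen_eq
  refine ⟨YoungDiagram.mem_iff_lt_rowLen.2 (by omega), ?_, ?_⟩
  · simp only [hookLen, content, hrow, hcol]; push_cast; ring
  · simp only [armLen, hrow]; push_cast; ring

lemma IsAddable.hookLen_armLen_of_snd_lt (ha : IsAddable μ a) (hr : IsRemovable μ r)
    (h : r.2 < a.2) :
    (a.1, r.2) ∈ μ ∧ hookLen μ (a.1, r.2) = content a - content r ∧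
      armLen μ (a.1, r.2) = a.2 - r.2 - 1 := by
  have hrow := ha.rowLen_eq
  have hcol := hr.colLen_eq
  refine ⟨YoungDiagram.mem_iff_lt_rowLen.2 (by omega), ?_, by simp only [armLen, hrow]⟩
  simp only [hookLen, content, hrow, hcol]; push_cast; ring

lemma SuccAH.height_le {n : ℕ} {u v : ℕ × ℕ} (h : SuccAH n u v) : height v ≤ height u := by
  rcases h with ⟨t, -, hc, hy⟩ | ⟨t, -, hc, hy⟩
  · have := mul_le_two_mul_AH_add_two n t
    simp only [content, height] at hc hy ⊢
    omega
  · have := two_mul_AH_lt n t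
    simp only [content, height] at hc hy ⊢
    omega

lemma RegularAH.height_add_two_le {n : ℕ} (hreg : RegularAH n μ) (ha : IsAddable μ a)
    (hr : IsRemovable μ r) (h : SuccAH n a r) : height r + 2 ≤ height a := by
  rcases le_or_gt a.2 r.2 with hle | hlt
  · obtain ⟨hmem, hhook, harm⟩ := ha.hookLen_armLen_of_snd_le hr hle
    rcases h with ⟨t, ht, hc, -⟩ | ⟨t, ht, hc, hy⟩
    · have hnt : 0 ≤ (n : ℤ) * t := by positivity
      linarith [hookLen_pos hmem]
    · have hne := harm ▸ hreg.armLen_ne hmem ht (hhook.trans hc)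
      have := two_mul_AH_lt n t
      simp only [content, height] at hc hy ⊢
      omega
  · obtain ⟨hmem, hhook, harm⟩ := ha.hookLen_armLen_of_snd_lt hr hlt
    rcases h with ⟨t, ht, hc, hy⟩ | ⟨t, ht, hc, -⟩
    · have hne := harm ▸ hreg.armLen_ne hmem ht (hhook.trans hc)
      have := mul_le_two_mul_AH_add_two n t
      simp only [content, height] at hc hy ⊢
      omega
    · have hnt : 0 ≤ (n : ℤ) * t := by positivity
      simp only [content, height] at hc ⊢
      omega

theorem between_heights_general (n : ℕ) (μ : YoungDiagram)
    (hreg : RegularAH n μ) (b b' : ℕ × ℕ)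
    (hb : IsAddable μ b) (hb' : IsRemovable μ b')
    (hgap : height b - 1 = height b' + 1) :
    (∀ c : ℕ × ℕ, IsAddable μ c → (n : ℤ) ∣ (content c - content b) →
      SuccAH n b c → SuccAH n c b' → height c = height b) ∧
    (∀ c : ℕ × ℕ, IsRemovable μ c → (n : ℤ) ∣ (content c - content b) →
      SuccAH n b c → SuccAH n c b' → height c = height b') := by
  refine ⟨fun c hc _ hbc hcb' => ?_, fun c hc _ hbc hcb' => ?_⟩
  · linarith [hbc.height_le, hreg.height_add_two_le hc hb' hcb']
  · linarith [hreg.height_add_two_le hb hc hbc, hcb'.height_le]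

/-- For an `A^H`-regular partition, an addable box `b` and a removable box `b'` of the same
color with `h(b) - 1 = h(b') + 1`: any addable box `c` of the same color with
`b ≻ c ≻ b'` has `h(c) = h(b)`, and any removable box `c` of the same color with
`b ≻ c ≻ b'` has `h(c) = h(b')`. -/
theorem between_heights (n : ℕ) (hn : 3 ≤ n) (μ : YoungDiagram)
    (hreg : RegularAH n μ) (b b' : ℕ × ℕ)
    (hb : IsAddable μ b) (hb' : IsRemovable μ b')
    (hcong : (n : ℤ) ∣ (content b - content b'))
    (hgap : height b - 1 = height b' + 1) :
    (∀ c : ℕ × ℕ, IsAddable μ c → (n : ℤ) ∣ (content c - content b) →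
      SuccAH n b c → SuccAH n c b' → height c = height b) ∧
    (∀ c : ℕ × ℕ, IsRemovable μ c → (n : ℤ) ∣ (content c - content b) →
      SuccAH n b c → SuccAH n c b' → height c = height b') :=
  between_heights_general n μ hreg b b' hb hb' hgap
end

section
/- Let μ = λ ⊔ b for a box b of color ī. Then exactly one of the following holds: there is a box b' of color ī+1 with h(b') = h(b)+1 such that A_{ī+1}(μ) = A_{ī+1}(λ) ∪ {b'} and R_{ī+1}(μ) = R_{ī+1}(λ); or there is a box b' of color ī+1 with h(b') = h(b)-1 such that R_{ī+1}(λ) = R_{ī+1}(μ) ∪ {b'} and A_{ī+1}(λ) = A_{ī+1}(μ). -/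
/-!
Adding `b` can change addability only at `b` and at its neighbours below and to the right, and
removability only at `b` and at its neighbours above and to the left. For `n ≥ 3` the only ones
of colour `ī+1` are the right neighbour (height `h(b)+1`) and the upper neighbour (height
`h(b)-1`). If `b` lies in the first row or the box above-right of `b` is in `λ`, the right
neighbour becomes addable and the upper one is removable in neither diagram; otherwise the upper
neighbour stops being removable and the right one is addable in neither.
-/

section YoungDiagramCorners

variable {μ : YoungDiagram} {p : ℕ × ℕ}

theorem isAddable_iff_forall_lt : IsAddable μ p ↔ p ∉ μ ∧ ∀ q < p, q ∈ μ := by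
  constructor
  · rintro ⟨hp, ν, hν⟩
    refine ⟨hp, fun q hq => ?_⟩
    have hpν : p ∈ ν := by simp [← YoungDiagram.mem_cells, hν]
    have hqν := ν.isLowerSet hq.le hpν
    rw [Finset.mem_coe, hν, Finset.mem_insert] at hqν
    exact (YoungDiagram.mem_cells q).mp (hqν.resolve_left hq.ne)
  · rintro ⟨hp, h⟩
    refine ⟨hp, ⟨insert p μ.cells, fun x y hyx hx => ?_⟩, rfl⟩
    simp only [Finset.coe_insert, Set.mem_insert_iff, Finset.mem_coe,
      YoungDiagram.mem_cells] at hx ⊢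
    rcases hx with rfl | hx
    · exact hyx.eq_or_lt.imp id (h y)
    · exact Or.inr (μ.isLowerSet hyx hx)

theorem isRemovable_iff_forall_gt :
    IsRemovable μ p ↔ p ∈ μ ∧ ∀ q, p < q → q ∉ μ := by
  constructor
  · rintro ⟨hp, ν, hν⟩
    refine ⟨hp, fun q hpq hq => ?_⟩
    have hqν : q ∈ ν := by
      rw [← YoungDiagram.mem_cells, hν, Finset.mem_erase, YoungDiagram.mem_cells]
      exact ⟨hpq.ne', hq⟩
    have hpν := ν.isLowerSet hpq.le hqν
    simp [hν] at hpν
  · rintro ⟨hp, h⟩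
    refine ⟨hp, ⟨μ.cells.erase p, fun x y hyx hx => ?_⟩, rfl⟩
    simp only [Finset.coe_erase, Set.mem_sdiff, Finset.mem_coe, YoungDiagram.mem_cells,
      Set.mem_singleton_iff] at hx ⊢
    refine ⟨μ.isLowerSet hyx hx.1, ?_⟩
    rintro rfl
    exact h x (lt_of_le_of_ne hyx (Ne.symm hx.2)) hx.1

theorem forall_lt_mem_iff :
    (∀ q < p, q ∈ μ) ↔
      (∀ i, p.1 = i + 1 → (i, p.2) ∈ μ) ∧ (∀ j, p.2 = j + 1 → (p.1, j) ∈ μ) := by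
  constructor
  · exact fun h => ⟨fun i hi => h _ (Prod.lt_iff.mpr (Or.inl ⟨by simp [hi], le_rfl⟩)),
      fun j hj => h _ (Prod.lt_iff.mpr (Or.inr ⟨le_rfl, by simp [hj]⟩))⟩
  · rintro ⟨hup, hleft⟩ q hq
    rcases Prod.lt_iff.mp hq with ⟨h1, h2⟩ | ⟨h1, h2⟩
    · exact μ.up_left_mem (by omega) h2 (hup (p.1 - 1) (by omega))
    · exact μ.up_left_mem h1 (by omega) (hleft (p.2 - 1) (by omega))

theorem forall_gt_not_mem_iff :
    (∀ q, p < q → q ∉ μ) ↔ (p.1 + 1, p.2) ∉ μ ∧ (p.1, p.2 + 1) ∉ μ := by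
  constructor
  · exact fun h => ⟨h _ (Prod.lt_iff.mpr (Or.inl ⟨by simp, le_rfl⟩)),
      h _ (Prod.lt_iff.mpr (Or.inr ⟨le_rfl, by simp⟩))⟩
  · rintro ⟨hdown, hright⟩ q hq hqμ
    rcases Prod.lt_iff.mp hq with ⟨h1, h2⟩ | ⟨h1, h2⟩
    · exact hdown (μ.up_left_mem (by omega) h2 hqμ)
    · exact hright (μ.up_left_mem h1 (by omega) hqμ)

theorem isAddable_iff_neighbours :
    IsAddable μ p ↔ p ∉ μ ∧
      (∀ i, p.1 = i + 1 → (i, p.2) ∈ μ) ∧ (∀ j, p.2 = j + 1 → (p.1, j) ∈ μ) := by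
  rw [isAddable_iff_forall_lt, forall_lt_mem_iff]

theorem isRemovable_iff_neighbours :
    IsRemovable μ p ↔ p ∈ μ ∧ (p.1 + 1, p.2) ∉ μ ∧ (p.1, p.2 + 1) ∉ μ := by
  rw [isRemovable_iff_forall_gt, forall_gt_not_mem_iff]

theorem mem_addables : p ∈ addables μ ↔ IsAddable μ p := by
  simp only [addables, Finset.mem_filter, Finset.mem_product, Finset.mem_range,
    and_iff_right_iff_imp]
  intro h
  rw [isAddable_iff_neighbours] at h
  obtain ⟨-, hup, hleft⟩ := h
  constructor
  · rcases hp : p.1 with _ | i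
    · omega
    · have := μ.up_left_mem le_rfl (Nat.zero_le _) (hup i hp)
      rw [YoungDiagram.mem_iff_lt_colLen] at this
      omega
  · rcases hp : p.2 with _ | j
    · omega
    · have := μ.up_left_mem (Nat.zero_le _) le_rfl (hleft j hp)
      rw [YoungDiagram.mem_iff_lt_rowLen] at this
      omega

theorem mem_removables : p ∈ removables μ ↔ IsRemovable μ p := by
  simp only [removables, Finset.mem_filter, YoungDiagram.mem_cells, and_iff_right_iff_imp]
  exact And.left

theorem mem_addablesC {n : ℕ} {i : ZMod n} :
    p ∈ addablesC n i μ ↔ IsAddable μ p ∧ (content p : ZMod n) = i := by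
  rw [addablesC, Finset.mem_filter, mem_addables]

theorem mem_removablesC {n : ℕ} {i : ZMod n} :
    p ∈ removablesC n i μ ↔ IsRemovable μ p ∧ (content p : ZMod n) = i := by
  rw [removablesC, Finset.mem_filter, mem_removables]

end YoungDiagramCorners

section InsertBox

variable {lam mu : YoungDiagram} {b p : ℕ × ℕ}

theorem mem_iff_of_cells_eq_insert (hmu : mu.cells = insert b lam.cells) {q : ℕ × ℕ} :
    q ∈ mu ↔ q = b ∨ q ∈ lam := by
  rw [← YoungDiagram.mem_cells, hmu, Finset.mem_insert, YoungDiagram.mem_cells]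

theorem isAddable_iff_of_cells_eq_insert (hmu : mu.cells = insert b lam.cells) (hpb : p ≠ b)
    (hbelow : p ≠ (b.1 + 1, b.2)) (hright : p ≠ (b.1, b.2 + 1)) :
    IsAddable mu p ↔ IsAddable lam p := by
  simp only [isAddable_iff_neighbours]
  simp only [mem_iff_of_cells_eq_insert hmu, Prod.ext_iff] at hpb hbelow hright ⊢
  grind

theorem isRemovable_iff_of_cells_eq_insert (hmu : mu.cells = insert b lam.cells) (hpb : p ≠ b)
    (hbelow : (p.1 + 1, p.2) ≠ b) (hright : (p.1, p.2 + 1) ≠ b) :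
    IsRemovable mu p ↔ IsRemovable lam p := by
  simp only [isRemovable_iff_neighbours]
  simp only [mem_iff_of_cells_eq_insert hmu, Prod.ext_iff] at hpb hbelow hright ⊢
  grind

end InsertBox

theorem ne_neighbours_of_color_eq_add_one {n : ℕ} (hn : 3 ≤ n) {b p : ℕ × ℕ}
    (hp : (content p : ZMod n) = content b + 1) :
    p ≠ b ∧ p ≠ (b.1 + 1, b.2) ∧ (p.1, p.2 + 1) ≠ b := by
  have hdvd : (n : ℤ) ∣ content p - content b - 1 :=
    (ZMod.intCast_zmod_eq_zero_iff_dvd _ n).mp (by push_cast; rw [hp]; ring)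
  have hsmall : ∀ k : ℤ, k = -1 ∨ k = -2 → ¬ (n : ℤ) ∣ k := by
    rintro k hk hk'
    have := Int.le_of_dvd (by omega) (Int.dvd_neg.mpr hk')
    omega
  refine ⟨?_, ?_, ?_⟩ <;> rintro rfl <;> refine hsmall _ ?_ hdvd <;> simp [content]

theorem cast_content_right {n : ℕ} (b : ℕ × ℕ) :
    (content (b.1, b.2 + 1) : ZMod n) = content b + 1 := by
  simp only [content]; push_cast; ring

theorem cast_content_up {n : ℕ} {b : ℕ × ℕ} {i : ℕ} (hi : b.1 = i + 1) :
    (content (i, b.2) : ZMod n) = content b + 1 := by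
  simp only [content, hi]; push_cast; ring

section InsertBoxColor

variable {n : ℕ} {lam mu : YoungDiagram} {b : ℕ × ℕ}

theorem not_isAddable_right (hb : b ∉ lam) : ¬ IsAddable lam (b.1, b.2 + 1) := by
  rw [isAddable_iff_forall_lt]
  exact fun h => hb (h.2 b (Prod.lt_iff.mpr (Or.inr ⟨le_rfl, Nat.lt_succ_self _⟩)))

theorem isAddable_right_of_cells_eq_insert (hb : b ∉ lam) (hmu : mu.cells = insert b lam.cells)
    (hup : ∀ i, b.1 = i + 1 → (i, b.2 + 1) ∈ lam) : IsAddable mu (b.1, b.2 + 1) := by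
  simp only [isAddable_iff_neighbours, mem_iff_of_cells_eq_insert hmu]
  refine ⟨?_, fun i hi => Or.inr (hup i hi), fun j hj => Or.inl ?_⟩
  · rintro (h | h)
    · simp [Prod.ext_iff] at h
    · exact hb (lam.up_left_mem le_rfl (Nat.le_succ _) h)
  · simp only [Nat.add_right_cancel_iff] at hj
    rw [← hj]

theorem addablesC_eq_insert_right (hn : 3 ≤ n) (hb : b ∉ lam)
    (hmu : mu.cells = insert b lam.cells) (hup : ∀ i, b.1 = i + 1 → (i, b.2 + 1) ∈ lam) :
    addablesC n (content b + 1) mu = insert (b.1, b.2 + 1) (addablesC n (content b + 1) lam) := by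
  ext p
  simp only [mem_addablesC, Finset.mem_insert]
  by_cases hpr : p = (b.1, b.2 + 1)
  · subst hpr
    simp [isAddable_right_of_cells_eq_insert hb hmu hup, cast_content_right]
  by_cases hc : (content p : ZMod n) = content b + 1
  · obtain ⟨hpb, hbelow, -⟩ := ne_neighbours_of_color_eq_add_one hn hc
    simp [isAddable_iff_of_cells_eq_insert hmu hpb hbelow hpr, hpr, hc]
  · simp [hpr, hc]

theorem removablesC_eq_of_up_right_mem (hn : 3 ≤ n) (hmu : mu.cells = insert b lam.cells)
    (hup : ∀ i, b.1 = i + 1 → (i, b.2 + 1) ∈ lam) :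
    removablesC n (content b + 1) mu = removablesC n (content b + 1) lam := by
  ext p
  simp only [mem_removablesC]
  by_cases hc : (content p : ZMod n) = content b + 1
  · obtain ⟨hpb, -, hleft⟩ := ne_neighbours_of_color_eq_add_one hn hc
    by_cases hbelow : (p.1 + 1, p.2) = b
    · have hright : (p.1, p.2 + 1) ∈ lam := by
        simpa [← hbelow] using hup p.1 (by rw [← hbelow])
      simp [isRemovable_iff_neighbours, mem_iff_of_cells_eq_insert hmu, hright]
    · rw [isRemovable_iff_of_cells_eq_insert hmu hpb hbelow hleft]
  · simp [hc]

theorem isRemovable_up_of_isAddable (hb : IsAddable lam b) {i : ℕ} (hi : b.1 = i + 1)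
    (hno : (i, b.2 + 1) ∉ lam) : IsRemovable lam (i, b.2) := by
  rw [isAddable_iff_neighbours] at hb
  rw [isRemovable_iff_neighbours]
  exact ⟨hb.2.1 i hi, by rw [← hi]; exact hb.1, hno⟩

theorem not_isRemovable_up (hmu : mu.cells = insert b lam.cells) {i : ℕ} (hi : b.1 = i + 1) :
    ¬ IsRemovable mu (i, b.2) := by
  rw [isRemovable_iff_neighbours, ← hi]
  exact fun h => h.2.1 ((mem_iff_of_cells_eq_insert hmu).mpr (Or.inl rfl))

theorem removablesC_eq_insert_up (hn : 3 ≤ n) (hb : IsAddable lam b)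
    (hmu : mu.cells = insert b lam.cells) {i : ℕ} (hi : b.1 = i + 1)
    (hno : (i, b.2 + 1) ∉ lam) :
    removablesC n (content b + 1) lam = insert (i, b.2) (removablesC n (content b + 1) mu) := by
  ext p
  simp only [mem_removablesC, Finset.mem_insert]
  by_cases hpu : p = (i, b.2)
  · subst hpu
    simp [isRemovable_up_of_isAddable hb hi hno, cast_content_up hi]
  by_cases hc : (content p : ZMod n) = content b + 1
  · obtain ⟨hpb, -, hleft⟩ := ne_neighbours_of_color_eq_add_one hn hc
    have hbelow : (p.1 + 1, p.2) ≠ b := by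
      rintro rfl
      exact hpu (Prod.ext (Nat.succ_injective hi) rfl)
    simp [isRemovable_iff_of_cells_eq_insert hmu hpb hbelow hleft, hpu, hc]
  · simp [hpu, hc]

theorem addablesC_eq_of_up_right_not_mem (hn : 3 ≤ n) (hb : b ∉ lam)
    (hmu : mu.cells = insert b lam.cells) {i : ℕ} (hi : b.1 = i + 1)
    (hno : (i, b.2 + 1) ∉ lam) :
    addablesC n (content b + 1) lam = addablesC n (content b + 1) mu := by
  ext p
  simp only [mem_addablesC]
  by_cases hpr : p = (b.1, b.2 + 1)
  · have hmu_right : ¬ IsAddable mu p := by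
      subst hpr
      rw [isAddable_iff_neighbours]
      rintro ⟨-, hup, -⟩
      rcases (mem_iff_of_cells_eq_insert hmu).mp (hup i hi) with h | h
      · simp [Prod.ext_iff] at h
      · exact hno h
    simp [hpr ▸ not_isAddable_right hb, hmu_right]
  by_cases hc : (content p : ZMod n) = content b + 1
  · obtain ⟨hpb, hbelow, -⟩ := ne_neighbours_of_color_eq_add_one hn hc
    rw [isAddable_iff_of_cells_eq_insert hmu hpb hbelow hpr]
  · simp [hc]

end InsertBoxColor

/-- If `μ = λ ⊔ b` with `b` of color `ī`, then exactly one of the following holds: either there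
is a box `b'` of color `ī+1` with `h(b') = h(b) + 1` such that
`A_{ī+1}(μ) = A_{ī+1}(λ) ∪ {b'}` (with `b' ∉ A_{ī+1}(λ)`) and `R_{ī+1}(μ) = R_{ī+1}(λ)`,
or there is a box `b'` of color `ī+1` with `h(b') = h(b) - 1` such that
`R_{ī+1}(λ) = R_{ī+1}(μ) ∪ {b'}` (with `b' ∉ R_{ī+1}(μ)`) and `A_{ī+1}(λ) = A_{ī+1}(μ)`. -/
theorem addable_removable_change (n : ℕ) (hn : 3 ≤ n) (lam mu : YoungDiagram) (b : ℕ × ℕ)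
    (hb : IsAddable lam b) (hmu : mu.cells = insert b lam.cells) :
    Xor'
      (∃ b' : ℕ × ℕ, (content b' : ZMod n) = (content b : ZMod n) + 1 ∧
        height b' = height b + 1 ∧
        b' ∉ addablesC n ((content b : ZMod n) + 1) lam ∧
        addablesC n ((content b : ZMod n) + 1) mu
          = insert b' (addablesC n ((content b : ZMod n) + 1) lam) ∧
        removablesC n ((content b : ZMod n) + 1) mu
          = removablesC n ((content b : ZMod n) + 1) lam)
      (∃ b' : ℕ × ℕ, (content b' : ZMod n) = (content b : ZMod n) + 1 ∧
        height b' = height b - 1 ∧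
        b' ∉ removablesC n ((content b : ZMod n) + 1) mu ∧
        removablesC n ((content b : ZMod n) + 1) lam
          = insert b' (removablesC n ((content b : ZMod n) + 1) mu) ∧
        addablesC n ((content b : ZMod n) + 1) lam
          = addablesC n ((content b : ZMod n) + 1) mu) := by
  by_cases hup : ∀ i, b.1 = i + 1 → (i, b.2 + 1) ∈ lam
  · have hA := addablesC_eq_insert_right hn hb.1 hmu hup
    have hnotin : (b.1, b.2 + 1) ∉ addablesC n (content b + 1) lam := fun h =>
      not_isAddable_right hb.1 (mem_addablesC.mp h).1
    have hheight : height (b.1, b.2 + 1) = height b + 1 := by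
      simp only [height]; push_cast; ring
    refine Or.inl ⟨⟨_, cast_content_right b, hheight, hnotin, hA,
      removablesC_eq_of_up_right_mem hn hmu hup⟩, ?_⟩
    rintro ⟨-, -, -, -, -, hA'⟩
    exact hnotin (hA' ▸ hA ▸ Finset.mem_insert_self _ _)
  · push Not at hup
    obtain ⟨i, hi, hno⟩ := hup
    have hR := removablesC_eq_insert_up hn hb hmu hi hno
    have hnotin : (i, b.2) ∉ removablesC n (content b + 1) mu := fun h =>
      not_isRemovable_up hmu hi (mem_removablesC.mp h).1
    have hA := addablesC_eq_of_up_right_not_mem hn hb.1 hmu hi hno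
    have hheight : height (i, b.2) = height b - 1 := by
      simp only [height, hi]; push_cast; ring
    refine Or.inr ⟨⟨_, cast_content_up hi, hheight, hnotin, hR, hA⟩, ?_⟩
    rintro ⟨_, -, -, hnotin', hA', -⟩
    exact hnotin' (hA ▸ hA' ▸ Finset.mem_insert_self _ _)
end
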